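/- For q = 2/27 and the sequence b_q = (7,6,5,4,3; q) (the Ferens sequence, rescaled), the achievement set E(b_q) has nonempty interior but is not a finite union of closed intervals. -/

import Mathlib

/-!
Write `q = 2/27` and `k = (7, 6, 5, 4, 3)`, so the terms are `k i * q ^ j` and their total is
`25 / (1 - q) = 27`. Because `1 ≤ 20 q`, the greedy algorithm writes every `y ∈ [0, 19 / (1 - q)]`
as `∑ d_j q ^ j` with digits `d_j ∈ {0, …, 19}`; since every integer from 3 to 22 is a subset sum
of `k`, the digits `d_j + 3` can be realised block by block, so the achievement set contains
`[3 / (1 - q), 22 / (1 - q)]`. On the other hand a subsum either uses a term of the first `j + 1`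
blocks, and is then at least `3 q ^ j`, or is at most the tail `25 q ^ (j + 1) / (1 - q) = 2 q ^ j`.
Hence each `3 q ^ j` is the right end of a gap `(2 q ^ j, 3 q ^ j)`, while a finite union of closed
intervals has only finitely many such points.
-/

open Set

noncomputable def achievementSet (x : ℕ → ℝ) : Set ℝ :=
  {y | ∃ A : Set ℕ, y = ∑' n, A.indicator x n}

/-- The multigeometric sequence (k 0, …, k m ; q): term (j*(m+1)+r) is k r * q^j. -/
noncomputable def mgSeq (m : ℕ) (k : Fin (m + 1) → ℝ) (q : ℝ) (n : ℕ) : ℝ :=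
  k ⟨n % (m + 1), Nat.mod_lt _ (Nat.succ_pos m)⟩ * q ^ (n / (m + 1))

def IsFinUnionClosedIntervals (S : Set ℝ) : Prop :=
  ∃ (n : ℕ) (a b : Fin n → ℝ), S = ⋃ i, Set.Icc (a i) (b i)

open Filter Topology

theorem hasSum_prod_of_nonneg {α β : Type*} {f : α × β → ℝ} {g : α → ℝ} {c : ℝ} (hf : 0 ≤ f)
    (hfib : ∀ a, HasSum (fun b => f (a, b)) (g a)) (hg : HasSum g c) : HasSum f c := by
  have hsum : Summable f :=
    (summable_prod_of_nonneg hf).2 ⟨fun a => (hfib a).summable, by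
      simpa only [(hfib _).tsum_eq] using hg.summable⟩
  exact (hsum.hasSum.prod_fiberwise hfib).unique hg ▸ hsum.hasSum

theorem self_mem_achievementSet (x : ℕ → ℝ) (n : ℕ) : x n ∈ achievementSet x :=
  ⟨{n}, by
    rw [tsum_eq_single n fun b hb => indicator_of_notMem (notMem_singleton_iff.2 hb) x,
      indicator_of_mem (mem_singleton n)]⟩

section Multigeometric

variable {m : ℕ} {k : Fin (m + 1) → ℝ} {q : ℝ}

theorem mgSeq_eq_comp_divModEquiv :
    mgSeq m k q = (fun p : ℕ × Fin (m + 1) => k p.2 * q ^ p.1) ∘ Nat.divModEquiv (m + 1) :=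
  rfl

theorem mgSeq_divModEquiv_symm (p : ℕ × Fin (m + 1)) :
    mgSeq m k q ((Nat.divModEquiv (m + 1)).symm p) = k p.2 * q ^ p.1 := by
  rw [mgSeq_eq_comp_divModEquiv, Function.comp_apply, Equiv.apply_symm_apply]

theorem mgSeq_nonneg (hk : ∀ i, 0 ≤ k i) (hq : 0 ≤ q) (n : ℕ) : 0 ≤ mgSeq m k q n :=
  mul_nonneg (hk _) (pow_nonneg hq _)

theorem mgSeq_add_mul (n J : ℕ) : mgSeq m k q (n + (m + 1) * J) = q ^ J * mgSeq m k q n := by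
  simp only [mgSeq, Nat.add_mul_mod_self_left, Nat.add_mul_div_left _ _ (Nat.succ_pos m),
    pow_add]
  ring

theorem hasSum_indicator_mgSeq (hk : ∀ i, 0 ≤ k i) (hq : 0 ≤ q)
    (s : ℕ → Finset (Fin (m + 1))) {c : ℝ} (h : HasSum (fun j => (∑ i ∈ s j, k i) * q ^ j) c) :
    HasSum ((Nat.divModEquiv (m + 1) ⁻¹' {p | p.2 ∈ s p.1}).indicator (mgSeq m k q)) c := by
  have hcomp : (Nat.divModEquiv (m + 1) ⁻¹' {p | p.2 ∈ s p.1}).indicator (mgSeq m k q) =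
      {p : ℕ × Fin (m + 1) | p.2 ∈ s p.1}.indicator (fun p => k p.2 * q ^ p.1) ∘
        Nat.divModEquiv (m + 1) := by
    funext n
    rw [mgSeq_eq_comp_divModEquiv]
    exact indicator_comp_right _
  rw [hcomp, Equiv.hasSum_iff]
  refine hasSum_prod_of_nonneg
    (fun p => indicator_nonneg (fun p _ => mul_nonneg (hk p.2) (pow_nonneg hq p.1)) p)
    (fun j => ?_) h
  convert hasSum_fintype (fun i => {p : ℕ × Fin (m + 1) | p.2 ∈ s p.1}.indicator
    (fun p => k p.2 * q ^ p.1) (j, i))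
  simp [Finset.sum_mul, indicator_apply, Finset.sum_ite_mem]

theorem mem_achievementSet_mgSeq (hk : ∀ i, 0 ≤ k i) (hq : 0 ≤ q)
    (s : ℕ → Finset (Fin (m + 1))) {c : ℝ} (h : HasSum (fun j => (∑ i ∈ s j, k i) * q ^ j) c) :
    c ∈ achievementSet (mgSeq m k q) :=
  ⟨_, (hasSum_indicator_mgSeq hk hq s h).tsum_eq.symm⟩

theorem hasSum_mgSeq (hk : ∀ i, 0 ≤ k i) (hq0 : 0 ≤ q) (hq1 : q < 1) :
    HasSum (mgSeq m k q) ((∑ i, k i) / (1 - q)) := by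
  simpa [div_eq_mul_inv] using hasSum_indicator_mgSeq hk hq0 (fun _ => Finset.univ)
    ((hasSum_geometric_of_lt_one hq0 hq1).mul_left (∑ i, k i))

theorem tsum_indicator_mgSeq_le (hk : ∀ i, 0 ≤ k i) (hq0 : 0 ≤ q) (hq1 : q < 1) {A : Set ℕ}
    {J : ℕ} (hA : ∀ n ∈ A, (m + 1) * J ≤ n) :
    ∑' n, A.indicator (mgSeq m k q) n ≤ q ^ J * ((∑ i, k i) / (1 - q)) := by
  have hx := hasSum_mgSeq hk hq0 hq1
  have hhead : ∑ n ∈ Finset.range ((m + 1) * J), A.indicator (mgSeq m k q) n = 0 :=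
    Finset.sum_eq_zero fun n hn => indicator_of_notMem
      (fun hnA => (Finset.mem_range.1 hn).not_ge (hA n hnA)) _
  have hshift :
      HasSum (fun n => mgSeq m k q (n + (m + 1) * J)) (q ^ J * ((∑ i, k i) / (1 - q))) := by
    rw [funext fun n => mgSeq_add_mul n J]
    exact hx.mul_left _
  calc ∑' n, A.indicator (mgSeq m k q) n
      = ∑' n, A.indicator (mgSeq m k q) (n + (m + 1) * J) := by
        rw [← (hx.summable.indicator A).sum_add_tsum_nat_add ((m + 1) * J), hhead, zero_add]
    _ ≤ ∑' n, mgSeq m k q (n + (m + 1) * J) :=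
        ((summable_nat_add_iff _).2 (hx.summable.indicator A)).tsum_le_tsum
          (fun n => indicator_le_self' (fun n _ => mgSeq_nonneg hk hq0 n) _) hshift.summable
    _ = q ^ J * ((∑ i, k i) / (1 - q)) := hshift.tsum_eq

theorem mul_pow_le_mgSeq {κ : ℝ} (hκ : 0 ≤ κ) (hk : ∀ i, κ ≤ k i) (hq0 : 0 ≤ q) (hq1 : q ≤ 1)
    {n j : ℕ} (hn : n < (m + 1) * (j + 1)) : κ * q ^ j ≤ mgSeq m k q n :=
  mul_le_mul (hk _) (pow_le_pow_of_le_one hq0 hq1 (Nat.lt_succ_iff.1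
    ((Nat.div_lt_iff_lt_mul (Nat.succ_pos m)).2 (mul_comm (m + 1) (j + 1) ▸ hn))))
    (pow_nonneg hq0 _) (hκ.trans (hk _))

theorem disjoint_Ioo_achievementSet_mgSeq {κ : ℝ} (hκ : 0 ≤ κ) (hk : ∀ i, κ ≤ k i)
    (hq0 : 0 ≤ q) (hq1 : q < 1) (j : ℕ) :
    Disjoint (Ioo (q ^ (j + 1) * ((∑ i, k i) / (1 - q))) (κ * q ^ j))
      (achievementSet (mgSeq m k q)) := by
  have hk0 : ∀ i, 0 ≤ k i := fun i => hκ.trans (hk i)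
  rw [disjoint_right]
  rintro _ ⟨A, rfl⟩ ⟨hlo, hhi⟩
  by_cases hA : ∃ n ∈ A, n < (m + 1) * (j + 1)
  · obtain ⟨n, hnA, hn⟩ := hA
    have hle : mgSeq m k q n ≤ ∑' n, A.indicator (mgSeq m k q) n := by
      rw [← indicator_of_mem hnA (mgSeq m k q)]
      exact ((hasSum_mgSeq hk0 hq0 hq1).summable.indicator A).le_tsum n fun n _ =>
        indicator_nonneg (fun n _ => mgSeq_nonneg hk0 hq0 n) n
    linarith [mul_pow_le_mgSeq hκ hk hq0 hq1.le hn]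
  · push Not at hA
    linarith [tsum_indicator_mgSeq_le hk0 hq0 hq1 hA]

end Multigeometric

section GreedyExpansion

variable {D : ℕ} {q : ℝ}

noncomputable def greedyDigit (D : ℕ) (y : ℝ) : ℕ := min D ⌊y⌋₊

noncomputable def greedyShift (D : ℕ) (q y : ℝ) : ℝ := (y - greedyDigit D y) / q

theorem greedyShift_mem_Icc (hq : 1 ≤ (D + 1) * q) (hq1 : q < 1) {y : ℝ}
    (hy : y ∈ Icc 0 (D / (1 - q))) : greedyShift D q y ∈ Icc 0 (D / (1 - q)) := by
  set C : ℝ := D / (1 - q)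
  have hq0 : 0 < q := by nlinarith
  have hC : C * (1 - q) = D := div_mul_cancel₀ _ (sub_pos.2 hq1).ne'
  have hdigit : (greedyDigit D y : ℝ) ≤ y :=
    (Nat.cast_le.2 (min_le_right _ _)).trans (Nat.floor_le hy.1)
  suffices y - greedyDigit D y ≤ q * C from
    ⟨div_nonneg (sub_nonneg.2 hdigit) hq0.le, (div_le_iff₀' hq0).2 this⟩
  rcases le_total D ⌊y⌋₊ with hD | hD
  · rw [greedyDigit, min_eq_left hD]
    linear_combination hy.2 + hC
  · rw [greedyDigit, min_eq_right hD]
    -- an unsaturated digit leaves a remainder below `1`, and `1 ≤ q * C` is `1 ≤ (D + 1) * q`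
    have h1 : 1 ≤ q * C := by
      have h : 1 - q ≤ q * C * (1 - q) := by rw [mul_assoc, hC]; linarith
      exact le_of_mul_le_mul_right (by linarith) (sub_pos.2 hq1)
    linarith [Nat.lt_floor_add_one y]

theorem sum_greedyDigit_add (hq : q ≠ 0) (y : ℝ) (n : ℕ) :
    ∑ j ∈ Finset.range n, (greedyDigit D ((greedyShift D q)^[j] y) : ℝ) * q ^ j
      + q ^ n * (greedyShift D q)^[n] y = y := by
  induction n with
  | zero => simp
  | succ n ih =>
    rw [Finset.sum_range_succ, Function.iterate_succ_apply', greedyShift]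
    conv_rhs => rw [← ih]
    field_simp
    ring

theorem exists_digits_hasSum (hq : 1 ≤ (D + 1) * q) (hq1 : q < 1) {y : ℝ}
    (hy : y ∈ Icc 0 (D / (1 - q))) :
    ∃ d : ℕ → ℕ, (∀ j, d j ≤ D) ∧ HasSum (fun j => (d j : ℝ) * q ^ j) y := by
  have hq0 : 0 < q := by nlinarith
  set r : ℕ → ℝ := fun n => (greedyShift D q)^[n] y
  have hr : ∀ n, r n ∈ Icc 0 (D / (1 - q)) := by
    intro n
    induction n with
    | zero => exact hy
    | succ n ih =>
      simp only [r, Function.iterate_succ_apply']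
      exact greedyShift_mem_Icc hq hq1 ih
  refine ⟨fun j => greedyDigit D (r j), fun j => min_le_left _ _, ?_⟩
  rw [hasSum_iff_tendsto_nat_of_nonneg (fun j => by positivity)]
  have htail : Tendsto (fun n => q ^ n * r n) atTop (𝓝 0) := by
    refine squeeze_zero (fun n => mul_nonneg (pow_nonneg hq0.le n) (hr n).1)
      (fun n => mul_le_mul_of_nonneg_left (hr n).2 (pow_nonneg hq0.le n)) ?_
    simpa using (tendsto_pow_atTop_nhds_zero_of_lt_one hq0.le hq1).mul_const (D / (1 - q))
  convert tendsto_const_nhds.sub htail using 1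
  · funext n
    exact eq_sub_of_add_eq (sum_greedyDigit_add hq0.ne' y n)
  · rw [sub_zero]

end GreedyExpansion

theorem Icc_subset_achievementSet_mgSeq {m : ℕ} {k : Fin (m + 1) → ℝ} {q : ℝ} {a D : ℕ}
    (hk : ∀ i, 0 ≤ k i)
    (hsums : ∀ c : ℕ, a ≤ c → c ≤ a + D → ∃ s : Finset (Fin (m + 1)), ∑ i ∈ s, k i = c)
    (hq : 1 ≤ (D + 1) * q) (hq1 : q < 1) :
    Icc (a / (1 - q)) ((a + D) / (1 - q)) ⊆ achievementSet (mgSeq m k q) := by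
  intro t ht
  have hq0 : 0 < q := by nlinarith
  obtain ⟨d, hdD, hd⟩ := exists_digits_hasSum hq hq1 (y := t - a / (1 - q))
    ⟨sub_nonneg.2 ht.1, by rw [sub_le_iff_le_add, ← add_div, add_comm]; exact ht.2⟩
  choose s hs using fun j => hsums (a + d j) le_self_add (Nat.add_le_add_left (hdD j) a)
  refine mem_achievementSet_mgSeq hk hq0.le s ?_
  convert hd.add ((hasSum_geometric_of_lt_one hq0.le hq1).mul_left (a : ℝ)) using 1
  · funext j
    rw [hs j]
    push_cast
    ring
  · rw [div_eq_mul_inv]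
    ring

theorem IsFinUnionClosedIntervals.finite_setOf_disjoint_Ioo {S : Set ℝ}
    (hS : IsFinUnionClosedIntervals S) : {p ∈ S | ∃ l < p, Disjoint (Ioo l p) S}.Finite := by
  obtain ⟨n, a, b, rfl⟩ := hS
  refine (finite_range a).subset ?_
  rintro p ⟨hp, l, hlp, hdisj⟩
  obtain ⟨i, hi⟩ := mem_iUnion.1 hp
  refine ⟨i, hi.1.eq_of_not_lt fun hap => ?_⟩
  have hz : (max l (a i) + p) / 2 ∈ Ioo l p := by
    constructor <;> linarith [le_max_left l (a i), max_lt hlp hap]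
  have hz' : (max l (a i) + p) / 2 ∈ ⋃ i, Icc (a i) (b i) :=
    mem_iUnion.2 ⟨i, by constructor <;> linarith [le_max_right l (a i), max_lt hlp hap, hi.2]⟩
  exact hdisj.ne_of_mem hz hz' rfl

theorem exists_finset_sum_ferens_eq (c : ℕ) (hc₁ : 3 ≤ c) (hc₂ : c ≤ 3 + 19) :
    ∃ s : Finset (Fin 5), ∑ i ∈ s, (![7, 6, 5, 4, 3] : Fin 5 → ℝ) i = c := by
  have hnat : ∀ c ≤ 22, 3 ≤ c →
      ∃ s : Finset (Fin 5), ∑ i ∈ s, (![7, 6, 5, 4, 3] : Fin 5 → ℕ) i = c := by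
    decide
  obtain ⟨s, hs⟩ := hnat c hc₂ hc₁
  refine ⟨s, ?_⟩
  rw [← hs, Nat.cast_sum]
  refine Finset.sum_congr rfl fun i _ => ?_
  fin_cases i <;> simp

theorem stmt15 :
    (interior (achievementSet (mgSeq 4 ![7, 6, 5, 4, 3] (2 / 27)))).Nonempty ∧
    ¬ IsFinUnionClosedIntervals (achievementSet (mgSeq 4 ![7, 6, 5, 4, 3] (2 / 27))) := by
  have hk : ∀ i : Fin 5, (3 : ℝ) ≤ ![7, 6, 5, 4, 3] i := by
    intro i; fin_cases i <;> norm_num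
  constructor
  · have hIcc := Icc_subset_achievementSet_mgSeq (q := 2 / 27) (a := 3) (D := 19)
      (fun i => by linarith [hk i]) exists_finset_sum_ferens_eq (by norm_num) (by norm_num)
    exact ⟨4, interior_mono hIcc (by rw [interior_Icc]; norm_num)⟩
  · intro hfin
    refine hfin.finite_setOf_disjoint_Ioo.not_infinite <| infinite_of_injective_forall_mem
      (f := fun j : ℕ => 3 * (2 / 27 : ℝ) ^ j) ?_ fun j => ⟨?_, 2 * (2 / 27) ^ j, ?_, ?_⟩
    · exact fun i j hij => pow_right_injective₀ (by norm_num) (by norm_num)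
        (mul_left_cancel₀ three_ne_zero hij)
    · have h := self_mem_achievementSet (mgSeq 4 ![7, 6, 5, 4, 3] (2 / 27))
        ((Nat.divModEquiv 5).symm (j, 4))
      rwa [mgSeq_divModEquiv_symm] at h
    · have : (0 : ℝ) < (2 / 27) ^ j := by positivity
      linarith
    · convert disjoint_Ioo_achievementSet_mgSeq (q := 2 / 27) (by norm_num) hk (by norm_num)
        (by norm_num) j using 2
      norm_num [Fin.sum_univ_succ, pow_succ]
      ring
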